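/- arXiv:math-ph/0701034 — 3 statements merged into one kernel-verified Lean document; each statement's English description precedes it below -/
import Mathlib

section
/- Let A be an n×n real diagonal matrix and B an n×n real antisymmetric matrix. Let σ be the 4×4 block-diagonal matrix with two copies of the 2×2 matrix [[0,-i],[i,0]]. Then the determinant of the 4n×4n matrix Q = A⊗I₄ - B⊗σ equals (det(A+B))⁴. -/
open Matrix
open scoped Kronecker

/-- The 4×4 block-diagonal matrix with two copies of the second Pauli matrix. -/
noncomputable def sigma4 : Matrix (Fin 4) (Fin 4) ℂ :=
  !![0, -Complex.I, 0, 0;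
     Complex.I, 0, 0, 0;
     0, 0, 0, -Complex.I;
     0, 0, Complex.I, 0]

noncomputable def U4 : Matrix (Fin 4) (Fin 4) ℂ :=
  !![1, 1, 0, 0;
     Complex.I, -Complex.I, 0, 0;
     0, 0, 1, 1;
     0, 0, Complex.I, -Complex.I]

noncomputable def dvec : Fin 4 → ℂ := ![1, -1, 1, -1]

lemma sigma4_mul_U4 : sigma4 * U4 = U4 * Matrix.diagonal dvec := by
  ext i j
  fin_cases i <;> fin_cases j <;>
    simp [sigma4, U4, dvec, Matrix.mul_apply, Fin.sum_univ_four, Matrix.diagonal,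
      Matrix.vecHead, Matrix.vecTail]

lemma det_U4 : U4.det = -4 := by
  simp [U4, Matrix.det_succ_row_zero, Fin.sum_univ_succ, Fin.succAbove]
  ring_nf
  simp [Complex.I_sq]

/-- For `A` diagonal and `B` antisymmetric (real `n×n` matrices),
`det (A ⊗ I₄ - B ⊗ σ) = (det (A + B))⁴`. -/
theorem det_kronecker_diag_antisym_pow_four {n : ℕ}
    (A B : Matrix (Fin n) (Fin n) ℝ)
    (hA : A.IsDiag) (hB : Bᵀ = -B) :
    ((A.map (Complex.ofReal)) ⊗ₖ (1 : Matrix (Fin 4) (Fin 4) ℂ)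
      - (B.map (Complex.ofReal)) ⊗ₖ sigma4).det
      = (((A + B).det : ℝ) : ℂ) ^ 4 := by
  set A' := A.map (Complex.ofReal) with hA'
  set B' := B.map (Complex.ofReal) with hB'
  have hconj : (A' ⊗ₖ (1 : Matrix (Fin 4) (Fin 4) ℂ) - B' ⊗ₖ sigma4)
      * ((1 : Matrix (Fin n) (Fin n) ℂ) ⊗ₖ U4)
      = ((1 : Matrix (Fin n) (Fin n) ℂ) ⊗ₖ U4)
        * (A' ⊗ₖ (1 : Matrix (Fin 4) (Fin 4) ℂ) - B' ⊗ₖ Matrix.diagonal dvec) := by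
    rw [sub_mul, mul_sub, ← Matrix.mul_kronecker_mul, ← Matrix.mul_kronecker_mul,
      ← Matrix.mul_kronecker_mul, ← Matrix.mul_kronecker_mul, sigma4_mul_U4]
    simp
  have hdetU : ((1 : Matrix (Fin n) (Fin n) ℂ) ⊗ₖ U4).det ≠ 0 := by
    rw [Matrix.det_kronecker]
    simp [det_U4]
  have hdet1 : (A' ⊗ₖ (1 : Matrix (Fin 4) (Fin 4) ℂ) - B' ⊗ₖ sigma4).det
      = (A' ⊗ₖ (1 : Matrix (Fin 4) (Fin 4) ℂ) - B' ⊗ₖ Matrix.diagonal dvec).det := by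
    have h := congrArg Matrix.det hconj
    rw [Matrix.det_mul, Matrix.det_mul] at h
    exact mul_left_cancel₀ hdetU (by rw [mul_comm _ ((1 : Matrix (Fin n) (Fin n) ℂ) ⊗ₖ U4).det] at h; exact h)
  have hbd : A' ⊗ₖ (1 : Matrix (Fin 4) (Fin 4) ℂ) - B' ⊗ₖ Matrix.diagonal dvec
      = Matrix.blockDiagonal (fun k => A' - dvec k • B') := by
    ext ⟨i, k⟩ ⟨j, l⟩
    simp only [Matrix.sub_apply, Matrix.kroneckerMap_apply, Matrix.blockDiagonal_apply,
      Matrix.one_apply, Matrix.diagonal_apply, Matrix.smul_apply, smul_eq_mul]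
    by_cases h : k = l <;> simp [h] <;> ring_nf
  have hAB : (A' - B').det = (A' + B').det := by
    have hAt : A'ᵀ = A' := by
      ext i j
      rcases eq_or_ne i j with rfl | h
      · rfl
      · simp [Matrix.transpose_apply, hA', Matrix.map_apply, hA h, hA h.symm]
    have hBt : B'ᵀ = -B' := by
      ext i j
      have h := congrFun (congrFun hB i) j
      simp only [Matrix.transpose_apply, Matrix.neg_apply] at h
      simp [hB', Matrix.map_apply, h]
    calc (A' - B').det = (A' - B')ᵀ.det := (Matrix.det_transpose _).symm
      _ = (A' + B').det := by rw [Matrix.transpose_sub, hAt, hBt, sub_neg_eq_add]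
  have hfin : ((A + B).map Complex.ofReal).det = (((A + B).det : ℝ) : ℂ) :=
    (RingHom.map_det Complex.ofRealHom (A + B)).symm
  rw [hdet1, hbd, Matrix.det_blockDiagonal, Fin.prod_univ_four]
  simp only [dvec]
  norm_num
  rw [hAB]
  have hsum : A' + B' = (A + B).map Complex.ofReal := by
    simp [hA', hB', Matrix.map_add]
  rw [hsum, hfin]
  rw [show (![1, -1, 1, -1] : Fin 4 → ℂ) 2 = 1 from rfl, show (![1, -1, 1, -1] : Fin 4 → ℂ) 3 = -1 from rfl]
  simp only [one_smul, neg_smul, sub_neg_eq_add]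
  rw [hAB, hsum, hfin]
  ring
end

section
/- Let M be a 2d×2d antisymmetric matrix over a field whose upper-right d×d block N (entries m_{i,d+j} for 1 ≤ i,j ≤ d) is upper triangular, whose lower-right d×d block (entries m_{d+i,d+j}) is zero. Then the Pfaffian of M equals ± the product of the diagonal entries of N, i.e. Pf(M)² = (∏_{i=1}^{d} m_{i,d+i})². -/
/-! Right-multiplying `[[E, N], [C, 0]]` by the block swap `[[0, 1], [1, 0]]` gives the block
upper-triangular `[[N, E], [0, C]]`, so up to the sign `(-1) ^ d` of the swap the determinant is
`det N * det C`. For `C = -Nᵀ` the two signs cancel and `det M = (det N) ^ 2`, and the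
determinant of the triangular `N` is the product of its diagonal. -/

open Matrix

theorem neg_one_pow_mul_neg_one_pow {R : Type*} [Monoid R] [HasDistribNeg R] (k : ℕ) :
    (-1 : R) ^ k * (-1) ^ k = 1 := by
  rw [← (Commute.neg_one_left _).mul_pow, neg_one_mul, neg_neg, one_pow]

namespace Matrix

variable {n R : Type*} [Fintype n] [DecidableEq n] [CommRing R]

theorem det_fromBlocks_swap :
    (fromBlocks 0 1 1 0 : Matrix (n ⊕ n) (n ⊕ n) R).det = (-1) ^ Fintype.card n := by
  -- a unimodular row operation makes the lower-right block invertible, with Schur complement `-1`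
  have h : fromBlocks 1 0 1 1 * fromBlocks 0 1 1 0 =
      (fromBlocks 0 1 1 1 : Matrix (n ⊕ n) (n ⊕ n) R) := by
    simp [fromBlocks_multiply]
  have := congrArg det h
  simpa [det_fromBlocks_zero₁₂, det_fromBlocks_one₂₂, det_neg] using this

theorem det_fromBlocks_zero₂₂ (A B C : Matrix n n R) :
    (fromBlocks A B C 0).det = (-1) ^ Fintype.card n * (B.det * C.det) := by
  have h : fromBlocks A B C 0 * fromBlocks 0 1 1 0 = fromBlocks B A 0 C := by
    simp [fromBlocks_multiply]
  have := congrArg det h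
  rw [det_mul, det_fromBlocks_swap, det_fromBlocks_zero₂₁] at this
  linear_combination (-1 : R) ^ Fintype.card n * this -
    (fromBlocks A B C 0).det * neg_one_pow_mul_neg_one_pow (R := R) (Fintype.card n)

theorem det_fromBlocks_neg_transpose_zero (A B : Matrix n n R) :
    (fromBlocks A B (-Bᵀ) 0).det = B.det ^ 2 := by
  rw [det_fromBlocks_zero₂₂, det_neg, det_transpose]
  linear_combination B.det ^ 2 * neg_one_pow_mul_neg_one_pow (R := R) (Fintype.card n)

end Matrix

theorem pfaffian_sq_of_upper_triangular_block_general {d : ℕ} {K : Type*} [Field K]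
    (E N : Matrix (Fin d) (Fin d) K)
    (hN : ∀ i j : Fin d, j < i → N i j = 0)
    (p : K) (hp : p ^ 2 = (Matrix.fromBlocks E N (-Nᵀ) 0).det) :
    p ^ 2 = (∏ i : Fin d, N i i) ^ 2 := by
  rw [hp, det_fromBlocks_neg_transpose_zero, det_of_isUpperTriangular fun i j => hN i j]

/-- For an antisymmetric block matrix `M = [[E, N], [-Nᵀ, 0]]` over a field with `E`
antisymmetric and `N` upper triangular, any Pfaffian `p` of `M` (characterized by
`p² = det M`) satisfies `p² = (∏ i, N i i)²`. -/
theorem pfaffian_sq_of_upper_triangular_block {d : ℕ} {K : Type*} [Field K]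
    (E N : Matrix (Fin d) (Fin d) K)
    (hE : Eᵀ = -E)
    (hN : ∀ i j : Fin d, j < i → N i j = 0)
    (p : K) (hp : p ^ 2 = (Matrix.fromBlocks E N (-Nᵀ) 0).det) :
    p ^ 2 = (∏ i : Fin d, N i i) ^ 2 :=
  pfaffian_sq_of_upper_triangular_block_general E N hN p hp
end

section
/- For any antisymmetric matrix M = [[E, N],[-Nᵀ, 0]] in 2×2 block form, where E is an antisymmetric d×d matrix and N is any d×d matrix, one has det(M) = (det N)². -/
open Matrix

/-- For an antisymmetric block matrix `M = [[E, N], [-Nᵀ, 0]]` over a commutative ring,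
with `E` antisymmetric `d×d` and `N` any `d×d` matrix, `det M = (det N)²`. -/
theorem det_fromBlocks_antisym_eq_det_sq {d : ℕ} {R : Type*} [CommRing R]
    (E N : Matrix (Fin d) (Fin d) R) (hE : Eᵀ = -E) :
    (Matrix.fromBlocks E N (-Nᵀ) 0).det = N.det ^ 2 := by
  set J : Matrix (Fin d ⊕ Fin d) (Fin d ⊕ Fin d) R := fromBlocks 0 1 (-1) 0 with hJ
  have hJfac : J = fromBlocks 1 1 0 1 * (fromBlocks 1 0 (-1) 1 * fromBlocks 1 1 0 1) := by
    simp [hJ, fromBlocks_multiply, Matrix.mul_one, Matrix.one_mul]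
  have hJdet : J.det = 1 := by
    rw [hJfac, det_mul, det_mul]
    simp [det_fromBlocks_zero₂₁, det_fromBlocks_zero₁₂]
  have hmul : fromBlocks E N (-Nᵀ) 0 * J = fromBlocks (-N) E 0 (-Nᵀ) := by
    simp [hJ, fromBlocks_multiply, Matrix.mul_one, Matrix.mul_neg]
  have := congrArg Matrix.det hmul
  rw [det_mul, hJdet, mul_one, det_fromBlocks_zero₂₁, det_neg, det_neg, det_transpose] at this
  rw [this, mul_mul_mul_comm, ← mul_pow, neg_one_mul, neg_neg, one_pow, one_mul, sq]
end
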